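/- Recovery of quantized factors (Corollary): Let S and S' be open connected subsets of ℝ^d and h : S → S' a smooth diffeomorphism. Let A be a discrete coordination on S whose axis-separator set 𝒢(A) has a backbone, let B be a discrete coordination on S', and suppose h(grid_S(A)) = grid_{S'}(B). Then there exist a permutation σ of {1,…,d} and a sign vector s ∈ {−1,+1}^d such that for every i ∈ {1,…,d}, with j = σ(i), and every z ∈ S: Q(z_i; A_i) = Q^{s_i}((h z)_j; B_j). -/

import Mathlib

open Set MeasureTheory Topology

noncomputable section

abbrev Euc (d : ℕ) := EuclideanSpace ℝ (Fin d)

/-- Axis separator: points of `S` whose `i`-th coordinate equals `τ`. -/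
def Gamma {d : ℕ} (S : Set (Euc d)) (i : Fin d) (τ : ℝ) : Set (Euc d) :=
  {z | z ∈ S ∧ z i = τ}

/-- Positive half: points of `S` whose `i`-th coordinate is greater than `τ`. -/
def GammaPos {d : ℕ} (S : Set (Euc d)) (i : Fin d) (τ : ℝ) : Set (Euc d) :=
  {z | z ∈ S ∧ τ < z i}

/-- Negative half: points of `S` whose `i`-th coordinate is less than `τ`. -/
def GammaNeg {d : ℕ} (S : Set (Euc d)) (i : Fin d) (τ : ℝ) : Set (Euc d) :=
  {z | z ∈ S ∧ z i < τ}

/-- `Γ_S(i,τ)` is an axis-separator of `S`: it is nonempty and connected, and both of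
its halves are nonempty and connected. (`IsConnected` includes nonemptiness.) -/
def IsAxisSeparator {d : ℕ} (S : Set (Euc d)) (i : Fin d) (τ : ℝ) : Prop :=
  IsConnected (Gamma S i τ) ∧ IsConnected (GammaPos S i τ) ∧ IsConnected (GammaNeg S i τ)

/-- A smooth diffeomorphism from `S` onto `S'` with explicit inverse `hinv`. -/
structure IsSmoothDiffeoOn {d : ℕ} (h hinv : Euc d → Euc d) (S S' : Set (Euc d)) : Prop where
  mapsTo : Set.MapsTo h S S'
  mapsTo_inv : Set.MapsTo hinv S' S
  left_inv : ∀ z ∈ S, hinv (h z) = z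
  right_inv : ∀ z' ∈ S', h (hinv z') = z'
  smooth : ContDiffOn ℝ (⊤ : ℕ∞) h S
  smooth_inv : ContDiffOn ℝ (⊤ : ℕ∞) hinv S'

/-- A discrete coordination on `S`: for each axis `i`, a strictly increasing nonempty tuple
of thresholds, each giving an axis-separator of `S`. -/
structure DiscreteCoordination {d : ℕ} (S : Set (Euc d)) where
  n : Fin d → ℕ
  n_pos : ∀ i, 0 < n i
  A : (i : Fin d) → Fin (n i) → ℝ
  mono : ∀ i, StrictMono (A i)
  sep : ∀ i k, IsAxisSeparator S i (A i k)

/-- The grid of a discrete coordination: the union of all its axis-separators. -/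
def DiscreteCoordination.grid {d : ℕ} {S : Set (Euc d)} (C : DiscreteCoordination S) :
    Set (Euc d) :=
  ⋃ (i : Fin d), ⋃ (k : Fin (C.n i)), Gamma S i (C.A i k)

/-- The parallel-separator-set along axis `i`. -/
def DiscreteCoordination.axisSet {d : ℕ} {S : Set (Euc d)} (C : DiscreteCoordination S)
    (i : Fin d) : Set (Set (Euc d)) :=
  {H | ∃ k : Fin (C.n i), H = Gamma S i (C.A i k)}

/-- The axis-separator set of a discrete coordination. -/
def DiscreteCoordination.sepSet {d : ℕ} {S : Set (Euc d)} (C : DiscreteCoordination S) :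
    Set (Set (Euc d)) :=
  {H | ∃ (i : Fin d) (k : Fin (C.n i)), H = Gamma S i (C.A i k)}

/-- A backbone: a choice of one separator per axis such that they all meet in a single
point and each of them meets every separator of the grid lying on a different axis. -/
def DiscreteCoordination.HasBackbone {d : ℕ} {S : Set (Euc d)}
    (C : DiscreteCoordination S) : Prop :=
  ∃ kstar : (i : Fin d) → Fin (C.n i),
    (∃ z : Euc d, (⋂ (i : Fin d), Gamma S i (C.A i (kstar i))) = {z}) ∧
    ∀ (i j : Fin d), j ≠ i → ∀ k : Fin (C.n j),
      (Gamma S i (C.A i (kstar i)) ∩ Gamma S j (C.A j k)).Nonempty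

/-- Quantization: `Q(x;T) = Σ_k 1[x ≥ T_k]`. -/
def Q {K : ℕ} (x : ℝ) (T : Fin K → ℝ) : ℕ :=
  (Finset.univ.filter fun k : Fin K => T k ≤ x).card

/-- Quantization with order reversal: `Q⁻(x;T) = Σ_k 1[x ≤ T_k]`. -/
def Qneg {K : ℕ} (x : ℝ) (T : Fin K → ℝ) : ℕ :=
  (Finset.univ.filter fun k : Fin K => x ≤ T k).card

/-- Signed quantization: `Q^{+1} = Q` and `Q^{-1} = Q⁻`. -/
def Qsgn {K : ℕ} (s : ℤ) (x : ℝ) (T : Fin K → ℝ) : ℕ :=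
  if s = 1 then Q x T else Qneg x T

/-- `μ` (absolutely continuous w.r.t. Lebesgue) has a non-removable discontinuity at `z`
if every measurable density of `μ` w.r.t. Lebesgue measure is discontinuous at `z`. -/
def HasNonRemovableDiscont {d : ℕ} (μ : Measure (Euc d)) (z : Euc d) : Prop :=
  ∀ q : Euc d → ENNReal, Measurable q → μ = volume.withDensity q → ¬ ContinuousAt q z

/-- `T` has exactly two connected components, namely `Cp` and `Cm`. -/
def TwoComponents {d : ℕ} (T Cp Cm : Set (Euc d)) : Prop :=
  Cp ≠ Cm ∧
  (∃ x ∈ T, connectedComponentIn T x = Cp) ∧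
  (∃ x ∈ T, connectedComponentIn T x = Cm) ∧
  ∀ x ∈ T, connectedComponentIn T x = Cp ∨ connectedComponentIn T x = Cm

/-- The intersection set of a finite family of separators: points lying on at least two
distinct members. -/
def interSet {d M : ℕ} (H : Fin M → Set (Euc d)) : Set (Euc d) :=
  ⋃ (m : Fin M), ⋃ (m' : Fin M), ⋃ (_ : m ≠ m'), H m ∩ H m'

/-!
The heart of the proof: a separator `Γ_S(i, A_{i,k})` is connected and is mapped by `h` into the
finite union of the hyperplanes `{y_j = B_{j,l}}`. By Baire's theorem the parts of it sent into a
single hyperplane have dense interiors; on the closure of such an interior, `Dh` kills the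
`j`-th coordinate along the directions of the separator. A surjective `Dh` cannot kill two
coordinates on a hyperplane, so these closures are pairwise disjoint, and connectedness puts the
whole separator into one hyperplane. Applied to `h⁻¹` as well, this shows that `h` maps every
separator of `A` onto a separator of `B`.

The backbone separators share a point, so they are sent to pairwise different axes; this defines
`σ`. A backbone separator meets every separator of another axis, so all separators of axis `i` go
to axis `σ i`. Finally `h` maps the two connected sides of a separator to the two sides of its
image, and as the separators of one axis are ordered, this orientation is the same for all of
them: counting the separators below a point then gives the quantizations.
-/

lemma eventually_add_smul_mem {E : Type*} [NormedAddCommGroup E] [NormedSpace ℝ E]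
    {U : Set E} {x : E} (hU : U ∈ 𝓝 x) (v : E) : ∀ᶠ t in 𝓝 (0 : ℝ), x + t • v ∈ U :=
  ((continuous_const.add (continuous_id.smul continuous_const)).tendsto' 0 x
    (by simp)).eventually hU

lemma fderiv_apply_eq_zero_of_eventually_eq {E : Type*} [NormedAddCommGroup E]
    [NormedSpace ℝ E] {d : ℕ} {f : E → Euc d} {x v : E} {j : Fin d} {c : ℝ}
    (hf : DifferentiableAt ℝ f x) (hc : ∀ᶠ t in 𝓝 (0 : ℝ), f (x + t • v) j = c) :
    fderiv ℝ f x v j = 0 := by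
  have hline : HasDerivAt (fun t : ℝ => f (x + t • v) j) (fderiv ℝ f x v j) 0 :=
    (EuclideanSpace.proj (𝕜 := ℝ) j).hasFDerivAt.comp_hasDerivAt 0
      (hf.hasFDerivAt.hasLineDerivAt v)
  exact hline.unique ((hasDerivAt_const 0 c).congr_of_eventuallyEq hc)

lemma surjective_fderiv_of_eventually_comp_eq_id {E F : Type*} [NormedAddCommGroup E]
    [NormedSpace ℝ E] [NormedAddCommGroup F] [NormedSpace ℝ F] {f : E → F} {g : F → E} {y : F}
    (hf : DifferentiableAt ℝ f (g y)) (hg : DifferentiableAt ℝ g y) (hfg : f ∘ g =ᶠ[𝓝 y] id) :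
    Function.Surjective (fderiv ℝ f (g y)) := by
  have hcomp : (fderiv ℝ f (g y)).comp (fderiv ℝ g y) = ContinuousLinearMap.id ℝ F := by
    rw [← fderiv_comp y hf hg, hfg.fderiv_eq, fderiv_id]
  exact fun u => ⟨fderiv ℝ g y u, by simpa using congr($hcomp u)⟩

lemma exists_apply_ne_zero_of_surjective {E : Type*} [AddCommGroup E] [Module ℝ E] {d : ℕ}
    (φ : E →ₗ[ℝ] ℝ) {L : E →ₗ[ℝ] Euc d} (hL : Function.Surjective L) {j j' : Fin d}
    (hjj' : j ≠ j') : ∃ v, φ v = 0 ∧ (L v j ≠ 0 ∨ L v j' ≠ 0) := by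
  obtain ⟨a, ha⟩ := hL (EuclideanSpace.single j 1)
  obtain ⟨b, hb⟩ := hL (EuclideanSpace.single j' 1)
  have haj : L a j = 1 := by simp [ha]
  have haj' : L a j' = 0 := by simp [ha, hjj'.symm]
  have hbj : L b j = 0 := by simp [hb, hjj']
  have hbj' : L b j' = 1 := by simp [hb]
  by_cases hφ : φ a = 0 ∧ φ b = 0
  · exact ⟨a, hφ.1, .inl (by simp [haj])⟩
  · refine ⟨φ b • a - φ a • b, by simp [mul_comm], ?_⟩
    simp only [map_sub, map_smul, PiLp.sub_apply, PiLp.smul_apply, smul_eq_mul, haj, haj', hbj,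
      hbj']
    by_contra! h0
    exact hφ ⟨by linarith [h0.2], by linarith [h0.1]⟩

lemma eq_of_Gamma_subset_Gamma {d : ℕ} {S : Set (Euc d)} (hS : IsOpen S) {i i' : Fin d}
    {τ τ' : ℝ} (hne : (Gamma S i τ).Nonempty) (hsub : Gamma S i τ ⊆ Gamma S i' τ') :
    i' = i ∧ τ' = τ := by
  obtain ⟨w, hwS, hwi⟩ := hne
  have hwi' : w i' = τ' := (hsub ⟨hwS, hwi⟩).2
  by_cases hii : i' = i
  · subst hii
    exact ⟨rfl, hwi' ▸ hwi⟩
  · -- moving `w` along the `i'`-th axis stays in `Gamma S i τ` but leaves `Gamma S i' τ'`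
    have hzero : ∀ᶠ t in 𝓝 (0 : ℝ), t = 0 := by
      filter_upwards [eventually_add_smul_mem (hS.mem_nhds hwS) (EuclideanSpace.single i' 1)]
        with t ht
      have hmem := (hsub ⟨ht, by simp [Ne.symm hii, hwi]⟩).2
      simpa [hwi'] using hmem
    obtain ⟨t, ht0, ht⟩ := ((hzero.filter_mono nhdsWithin_le_nhds).and
      (self_mem_nhdsWithin : ∀ᶠ t in 𝓝[≠] (0 : ℝ), t ≠ 0)).exists
    exact (ht ht0).elim

lemma IsPreconnected.forall_lt_or_forall_gt {X : Type*} [TopologicalSpace X] {T : Set X}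
    (hT : IsPreconnected T) {f : X → ℝ} (hf : ContinuousOn f T) {c : ℝ}
    (hc : ∀ w ∈ T, f w ≠ c) : (∀ w ∈ T, f w < c) ∨ (∀ w ∈ T, c < f w) := by
  by_contra! h
  obtain ⟨⟨a, haT, ha⟩, ⟨b, hbT, hb⟩⟩ := h
  obtain ⟨w, hwT, hw⟩ := hT.intermediate_value hbT haT hf ⟨hb, ha⟩
  exact hc w hwT hw

lemma exists_eq_univ_of_pairwise_disjoint_closure_interior {X ι : Type*} [TopologicalSpace X]
    [ConnectedSpace X] [BaireSpace X] [Finite ι] {F : ι → Set X} (hF : ∀ p, IsClosed (F p))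
    (hcov : ⋃ p, F p = univ)
    (hdisj : Pairwise fun p q => Disjoint (closure (interior (F p))) (closure (interior (F q)))) :
    ∃ p, F p = univ := by
  set C := fun p => closure (interior (F p))
  have hCcov : ⋃ p, C p = univ := by
    rw [← closure_iUnion_of_finite]
    exact (dense_iUnion_interior_of_closed hF hcov).closure_eq
  obtain ⟨p, hp⟩ := mem_iUnion.mp (hCcov ▸ mem_univ (Classical.arbitrary X))
  have hCcompl : (C p)ᶜ = ⋃ q ∈ ({p}ᶜ : Set ι), C q := by
    ext x
    obtain ⟨q, hq⟩ := mem_iUnion.mp (hCcov ▸ mem_univ x)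
    constructor
    · intro hx
      exact mem_biUnion (fun hqp : q = p => hx (hqp ▸ hq)) hq
    · simp only [mem_iUnion]
      rintro ⟨q, hqp, hxq⟩ hxp
      exact (hdisj hqp).le_bot ⟨hxq, hxp⟩
  have hopen : IsOpen (C p) := by
    rw [← compl_compl (C p), hCcompl]
    exact ((Set.toFinite _).isClosed_biUnion fun q _ => isClosed_closure).isOpen_compl
  refine ⟨p, eq_univ_of_univ_subset ?_⟩
  rw [← IsClopen.eq_univ ⟨isClosed_closure, hopen⟩ ⟨_, hp⟩]
  exact closure_minimal interior_subset (hF p)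

theorem fderiv_apply_eq_zero_of_mem_interior {d : ℕ} {S : Set (Euc d)} (hS : IsOpen S)
    {h : Euc d → Euc d} (hh : DifferentiableOn ℝ h S) {i j : Fin d} {τ c : ℝ}
    {x : Gamma S i τ} (hx : x ∈ interior {y : Gamma S i τ | h y j = c}) {v : Euc d}
    (hv : v i = 0) : fderiv ℝ h x v j = 0 := by
  obtain ⟨u, hu, huc⟩ := (mem_nhds_subtype _ _ _).mp (mem_interior_iff_mem_nhds.mp hx)
  refine fderiv_apply_eq_zero_of_eventually_eq (c := c)
    (hh.differentiableAt (hS.mem_nhds x.2.1)) ?_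
  filter_upwards [eventually_add_smul_mem (hS.mem_nhds x.2.1) v,
    eventually_add_smul_mem hu v] with t htS htu
  exact huc (a := ⟨_, htS, by simp [hv, x.2.2]⟩) htu

theorem exists_coord_eq_on_Gamma_of_finite_cover {d : ℕ} {S : Set (Euc d)} (hS : IsOpen S)
    {h : Euc d → Euc d} (hh : ContDiffOn ℝ 1 h S) {i : Fin d} {τ : ℝ}
    (hsurj : ∀ w ∈ Gamma S i τ, Function.Surjective (fderiv ℝ h w))
    (hG : IsConnected (Gamma S i τ)) {P : Set (Fin d × ℝ)} (hP : P.Finite)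
    (hcov : ∀ w ∈ Gamma S i τ, ∃ p ∈ P, h w p.1 = p.2) :
    ∃ p ∈ P, ∀ w ∈ Gamma S i τ, h w p.1 = p.2 := by
  set G := Gamma S i τ
  have hGS : G ⊆ S := fun w hw => hw.1
  have : ConnectedSpace G := isConnected_iff_connectedSpace.mp hG
  have : LocallyCompactSpace G := (hS.isLocallyClosed.inter
    (isClosed_eq (EuclideanSpace.proj i).continuous continuous_const).isLocallyClosed
    ).locallyCompactSpace
  have : Finite P := hP.to_subtype
  set F : P → Set G := fun p => {x | h x p.1.1 = p.1.2}
  set D : Fin d → Set G := fun j => {x | ∀ v : Euc d, v i = 0 → fderiv ℝ h x v j = 0}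
  have hF : ∀ p, IsClosed (F p) := fun p =>
    isClosed_eq ((EuclideanSpace.proj p.1.1).continuous.comp_continuousOn
      (hh.continuousOn.mono hGS)).domRestrict continuous_const
  have hD : ∀ j, IsClosed (D j) := by
    intro j
    simp only [D, ofPred_forall]
    refine isClosed_iInter fun v => isClosed_iInter fun _ => isClosed_eq ?_ continuous_const
    exact ((EuclideanSpace.proj j).continuous.comp_continuousOn
      (((hh.continuousOn_fderiv_of_isOpen hS le_rfl).clm_apply continuousOn_const).mono
        hGS)).domRestrict
  have hintD : ∀ p, interior (F p) ⊆ D p.1.1 := fun _ _ hx _ hv =>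
    fderiv_apply_eq_zero_of_mem_interior hS (hh.differentiableOn one_ne_zero) hx hv
  have hreg : ∀ p, closure (interior (F p)) ⊆ F p ∩ D p.1.1 := fun p =>
    closure_minimal (subset_inter interior_subset (hintD p)) ((hF p).inter (hD _))
  have hdisj : Pairwise fun p q => Disjoint (closure (interior (F p)))
      (closure (interior (F q))) := by
    intro p q hpq
    refine Set.disjoint_left.mpr fun x hxp hxq => ?_
    obtain ⟨hFp, hDp⟩ := hreg p hxp
    obtain ⟨hFq, hDq⟩ := hreg q hxq
    by_cases hj : p.1.1 = q.1.1
    · exact hpq (Subtype.ext (Prod.ext hj (hFp.symm.trans (hj ▸ hFq))))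
    · obtain ⟨v, hv, hne⟩ := exists_apply_ne_zero_of_surjective
        (EuclideanSpace.proj (𝕜 := ℝ) i).toLinearMap (hsurj x x.2) hj
      exact hne.elim (· (hDp v hv)) (· (hDq v hv))
  have hFcov : ⋃ p, F p = univ := eq_univ_of_forall fun x => by
    obtain ⟨p, hp, hpx⟩ := hcov x x.2
    exact mem_iUnion.mpr ⟨⟨p, hp⟩, hpx⟩
  obtain ⟨p, hp⟩ := exists_eq_univ_of_pairwise_disjoint_closure_interior hF hFcov hdisj
  exact ⟨p.1, p.2, fun w hw => show (⟨w, hw⟩ : G) ∈ F p from hp ▸ mem_univ _⟩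

namespace IsSmoothDiffeoOn

variable {d : ℕ} {S S' : Set (Euc d)} {h hinv : Euc d → Euc d}

theorem symm (hdiff : IsSmoothDiffeoOn h hinv S S') : IsSmoothDiffeoOn hinv h S' S :=
  ⟨hdiff.mapsTo_inv, hdiff.mapsTo, hdiff.right_inv, hdiff.left_inv, hdiff.smooth_inv,
    hdiff.smooth⟩

theorem invOn (hdiff : IsSmoothDiffeoOn h hinv S S') : InvOn hinv h S S' :=
  ⟨hdiff.left_inv, hdiff.right_inv⟩

theorem contDiffOn_one (hdiff : IsSmoothDiffeoOn h hinv S S') : ContDiffOn ℝ 1 h S :=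
  hdiff.smooth.of_le (by exact_mod_cast le_top)

theorem differentiableAt (hdiff : IsSmoothDiffeoOn h hinv S S') (hS : IsOpen S) {w : Euc d}
    (hw : w ∈ S) : DifferentiableAt ℝ h w :=
  (hdiff.contDiffOn_one.differentiableOn one_ne_zero).differentiableAt (hS.mem_nhds hw)

theorem surjective_fderiv (hdiff : IsSmoothDiffeoOn h hinv S S') (hS : IsOpen S)
    (hS' : IsOpen S') {w : Euc d} (hw : w ∈ S) : Function.Surjective (fderiv ℝ h w) := by
  have hhw := hS'.mem_nhds (hdiff.mapsTo hw)
  have hf : DifferentiableAt ℝ h (hinv (h w)) := by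
    rw [hdiff.left_inv w hw]
    exact hdiff.differentiableAt hS hw
  simpa only [hdiff.left_inv w hw] using surjective_fderiv_of_eventually_comp_eq_id hf
    (hdiff.symm.differentiableAt hS' (hdiff.mapsTo hw))
    (Filter.eventually_of_mem hhw hdiff.right_inv)

end IsSmoothDiffeoOn

namespace DiscreteCoordination

variable {d : ℕ} {S : Set (Euc d)}

theorem Gamma_subset_grid (C : DiscreteCoordination S) (i : Fin d) (k : Fin (C.n i)) :
    Gamma S i (C.A i k) ⊆ C.grid :=
  subset_iUnion₂ (s := fun i k => Gamma S i (C.A i k)) i k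

theorem grid_subset (C : DiscreteCoordination S) : C.grid ⊆ S :=
  iUnion₂_subset fun _ _ _ hw => hw.1

end DiscreteCoordination

section SeparatorCorrespondence

variable {d : ℕ} {S S' : Set (Euc d)} {h hinv : Euc d → Euc d}

theorem image_grid_of_image_grid (hdiff : IsSmoothDiffeoOn h hinv S S')
    {CA : DiscreteCoordination S} {CB : DiscreteCoordination S'}
    (hgrid : h '' CA.grid = CB.grid) : hinv '' CB.grid = CA.grid := by
  rw [← hgrid, hdiff.invOn.1.image_image' CA.grid_subset]

theorem exists_mapsTo_Gamma (hS : IsOpen S) (hS' : IsOpen S')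
    (hdiff : IsSmoothDiffeoOn h hinv S S') {CA : DiscreteCoordination S}
    {CB : DiscreteCoordination S'} (hgrid : h '' CA.grid = CB.grid) (i : Fin d)
    (k : Fin (CA.n i)) : ∃ j l, MapsTo h (Gamma S i (CA.A i k)) (Gamma S' j (CB.A j l)) := by
  have hcov : ∀ w ∈ Gamma S i (CA.A i k), ∃ p ∈ range fun b : Σ j, Fin (CB.n j) =>
      (b.1, CB.A b.1 b.2), h w p.1 = p.2 := by
    intro w hw
    have hw' : h w ∈ CB.grid := hgrid ▸ mem_image_of_mem h (CA.Gamma_subset_grid i k hw)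
    obtain ⟨j, l, hjl⟩ := mem_iUnion₂.mp hw'
    exact ⟨_, ⟨⟨j, l⟩, rfl⟩, hjl.2⟩
  obtain ⟨_, ⟨⟨j, l⟩, rfl⟩, hconst⟩ := exists_coord_eq_on_Gamma_of_finite_cover hS
    hdiff.contDiffOn_one (fun w hw => hdiff.surjective_fderiv hS hS' hw.1) (CA.sep i k).1
    (finite_range _) hcov
  exact ⟨j, l, fun w hw => ⟨hdiff.mapsTo hw.1, hconst w hw⟩⟩

theorem exists_image_Gamma_eq (hS : IsOpen S) (hS' : IsOpen S')
    (hdiff : IsSmoothDiffeoOn h hinv S S') {CA : DiscreteCoordination S}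
    {CB : DiscreteCoordination S'} (hgrid : h '' CA.grid = CB.grid) (i : Fin d)
    (k : Fin (CA.n i)) : ∃ j l, h '' Gamma S i (CA.A i k) = Gamma S' j (CB.A j l) := by
  obtain ⟨j, l, hmaps⟩ := exists_mapsTo_Gamma hS hS' hdiff hgrid i k
  obtain ⟨i', k', hmaps'⟩ :=
    exists_mapsTo_Gamma hS' hS hdiff.symm (image_grid_of_image_grid hdiff hgrid) j l
  have hsub : Gamma S i (CA.A i k) ⊆ Gamma S i' (CA.A i' k') := fun w hw =>
    hdiff.left_inv w hw.1 ▸ hmaps' (hmaps hw)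
  obtain ⟨rfl, hτ⟩ := eq_of_Gamma_subset_Gamma hS (CA.sep i k).1.nonempty hsub
  rw [hτ] at hmaps'
  exact ⟨j, l, ((hdiff.invOn.mono (fun w hw => hw.1) (fun w hw => hw.1)).bijOn hmaps
    hmaps').image_eq⟩

theorem eq_of_image_Gamma_eq (hS : IsOpen S) (hinj : InjOn h S) {i i' : Fin d} {τ τ' : ℝ}
    (hne : (Gamma S i τ).Nonempty) (heq : h '' Gamma S i τ = h '' Gamma S i' τ') :
    i = i' ∧ τ = τ' := by
  rw [hinj.image_eq_image_iff (fun w hw => hw.1) (fun w hw => hw.1)] at heq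
  obtain ⟨hi, hτ⟩ := eq_of_Gamma_subset_Gamma hS hne heq.subset
  exact ⟨hi.symm, hτ.symm⟩

theorem eq_of_image_Gamma_eq_of_mem (hS : IsOpen S) (hinj : InjOn h S) {i₁ i₂ j₁ j₂ : Fin d}
    {τ₁ τ₂ c₁ c₂ : ℝ} (h₁ : h '' Gamma S i₁ τ₁ = Gamma S' j₁ c₁)
    (h₂ : h '' Gamma S i₂ τ₂ = Gamma S' j₂ c₂) (hj : j₁ = j₂) {z : Euc d}
    (hz₁ : z ∈ Gamma S i₁ τ₁) (hz₂ : z ∈ Gamma S i₂ τ₂) : i₁ = i₂ := by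
  subst hj
  have hz₁' : h z ∈ Gamma S' j₁ c₁ := h₁ ▸ mem_image_of_mem h hz₁
  have hz₂' : h z ∈ Gamma S' j₁ c₂ := h₂ ▸ mem_image_of_mem h hz₂
  have hc : c₁ = c₂ := hz₁'.2.symm.trans hz₂'.2
  exact (eq_of_image_Gamma_eq hS hinj ⟨z, hz₁⟩ (h₁.trans (hc ▸ h₂.symm))).1

theorem exists_perm_image_Gamma_eq (hS : IsOpen S) (hS' : IsOpen S')
    (hdiff : IsSmoothDiffeoOn h hinv S S') {CA : DiscreteCoordination S}
    {CB : DiscreteCoordination S'} (hgrid : h '' CA.grid = CB.grid) (hbb : CA.HasBackbone) :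
    ∃ σ : Equiv.Perm (Fin d), ∀ i k, ∃ l,
      h '' Gamma S i (CA.A i k) = Gamma S' (σ i) (CB.A (σ i) l) := by
  choose J L hJL using exists_image_Gamma_eq hS hS' hdiff hgrid
  obtain ⟨kstar, ⟨z₀, hz₀⟩, hmeets⟩ := hbb
  have hinj : InjOn h S := hdiff.invOn.1.injOn
  have hz₀mem : ∀ i, z₀ ∈ Gamma S i (CA.A i (kstar i)) := fun i =>
    mem_iInter.mp (hz₀ ▸ mem_singleton z₀) i
  have hσinj : Function.Injective fun i => J i (kstar i) := fun i₁ i₂ he =>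
    eq_of_image_Gamma_eq_of_mem hS hinj (hJL i₁ _) (hJL i₂ _) he (hz₀mem i₁) (hz₀mem i₂)
  set σ := Equiv.ofBijective _ (Finite.injective_iff_bijective.mp hσinj)
  have haxis : ∀ i k, J i k = σ i := by
    intro i k
    obtain ⟨i', hi'⟩ := σ.surjective (J i k)
    by_cases hii : i' = i
    · rw [← hi', hii]
    · obtain ⟨z, hz', hz⟩ := hmeets i' i (Ne.symm hii) k
      exact absurd (eq_of_image_Gamma_eq_of_mem hS hinj (hJL i' _) (hJL i k) hi' hz' hz) hii
  refine ⟨σ, fun i k => ?_⟩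
  rw [← haxis i k]
  exact ⟨L i k, hJL i k⟩

theorem exists_equiv_image_Gamma_eq (hS : IsOpen S) (hS' : IsOpen S')
    (hdiff : IsSmoothDiffeoOn h hinv S S') {CA : DiscreteCoordination S}
    {CB : DiscreteCoordination S'} (hgrid : h '' CA.grid = CB.grid) {σ : Fin d → Fin d}
    (hσ : Function.Injective σ)
    (himg : ∀ i k, ∃ l, h '' Gamma S i (CA.A i k) = Gamma S' (σ i) (CB.A (σ i) l))
    (i : Fin d) : ∃ e : Fin (CA.n i) ≃ Fin (CB.n (σ i)),
      ∀ k, h '' Gamma S i (CA.A i k) = Gamma S' (σ i) (CB.A (σ i) (e k)) := by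
  choose ψ hψ using himg
  have hinj : InjOn h S := hdiff.invOn.1.injOn
  have hψinj : Function.Injective (ψ i) := fun k₁ k₂ he => (CA.mono i).injective
    (eq_of_image_Gamma_eq hS hinj (CA.sep i k₁).1.nonempty (by rw [hψ, hψ, he])).2
  have hψsurj : Function.Surjective (ψ i) := by
    intro l
    obtain ⟨i', k', hpre⟩ := exists_image_Gamma_eq hS' hS hdiff.symm
      (image_grid_of_image_grid hdiff hgrid) (σ i) l
    have himg' : h '' Gamma S i' (CA.A i' k') = Gamma S' (σ i) (CB.A (σ i) l) := by
      rw [← hpre, hdiff.invOn.2.image_image' fun w hw => hw.1]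
    obtain ⟨hσi, hc⟩ := eq_of_Gamma_subset_Gamma hS' (CB.sep _ l).1.nonempty
      (himg'.symm.trans (hψ i' k')).subset
    obtain rfl := hσ hσi
    exact ⟨k', (CB.mono _).injective hc⟩
  exact ⟨Equiv.ofBijective (ψ i) ⟨hψinj, hψsurj⟩, hψ i⟩

end SeparatorCorrespondence

section LevelSets

variable {X : Type*} {S : Set X} {u f : X → ℝ} {a c : ℝ}

lemma le_iff_le_of_sign_agree (hlevel : ∀ w ∈ S, f w = c ↔ u w = a)
    (hpos : ∀ w ∈ S, a < u w → c < f w) (hneg : ∀ w ∈ S, u w < a → f w < c) :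
    ∀ w ∈ S, a ≤ u w ↔ c ≤ f w := by
  intro w hw
  rcases lt_trichotomy (u w) a with hlt | heq | hgt
  · exact iff_of_false hlt.not_ge (hneg w hw hlt).not_ge
  · exact iff_of_true heq.ge ((hlevel w hw).mpr heq).ge
  · exact iff_of_true hgt.le (hpos w hw hgt).le

lemma le_of_lt_off_level_set (hlevel : ∀ w ∈ S, f w = c ↔ u w = a)
    (hpos : ∀ w ∈ S, a < u w → f w < c) (hneg : ∀ w ∈ S, u w < a → f w < c) :
    ∀ w ∈ S, f w ≤ c := by
  intro w hw
  rcases lt_trichotomy (u w) a with hlt | heq | hgt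
  · exact (hneg w hw hlt).le
  · exact ((hlevel w hw).mpr heq).le
  · exact (hpos w hw hgt).le

theorem le_iff_or_le_iff_of_level_set [TopologicalSpace X] (hf : ContinuousOn f S)
    (hpos : IsPreconnected {w ∈ S | a < u w}) (hneg : IsPreconnected {w ∈ S | u w < a})
    (hlevel : ∀ w ∈ S, f w = c ↔ u w = a) (hbelow : ∃ w ∈ S, f w < c)
    (habove : ∃ w ∈ S, c < f w) :
    (∀ w ∈ S, a ≤ u w ↔ c ≤ f w) ∨ (∀ w ∈ S, a ≤ u w ↔ f w ≤ c) := by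
  have hlevel' : ∀ w ∈ S, -f w = -c ↔ u w = a := fun w hw => neg_inj.trans (hlevel w hw)
  rcases hpos.forall_lt_or_forall_gt (hf.mono fun w hw => hw.1)
    (fun w hw => (hlevel w hw.1).not.mpr hw.2.ne') with hP | hP <;>
  rcases hneg.forall_lt_or_forall_gt (hf.mono fun w hw => hw.1)
    (fun w hw => (hlevel w hw.1).not.mpr hw.2.ne) with hN | hN
  · obtain ⟨w, hw, hcw⟩ := habove
    exact absurd (le_of_lt_off_level_set hlevel (fun w hw h => hP w ⟨hw, h⟩)
      (fun w hw h => hN w ⟨hw, h⟩) w hw) hcw.not_ge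
  · exact .inr fun w hw =>
      (le_iff_le_of_sign_agree hlevel' (fun w hw h => neg_lt_neg (hP w ⟨hw, h⟩))
        (fun w hw h => neg_lt_neg (hN w ⟨hw, h⟩)) w hw).trans neg_le_neg_iff
  · exact .inl (le_iff_le_of_sign_agree hlevel (fun w hw h => hP w ⟨hw, h⟩)
      (fun w hw h => hN w ⟨hw, h⟩))
  · obtain ⟨w, hw, hcw⟩ := hbelow
    exact absurd (le_of_lt_off_level_set hlevel' (fun w hw h => neg_lt_neg (hP w ⟨hw, h⟩))
      (fun w hw h => neg_lt_neg (hN w ⟨hw, h⟩)) w hw) (neg_le_neg_iff.not.mpr hcw.not_ge)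

lemma false_of_le_iff_le_of_le_iff_ge {a' c' : ℝ} (ha : a ≠ a') {p p' : X} (hp : p ∈ S)
    (hp' : p' ∈ S) (hup : u p = a) (hfp : f p = c) (hup' : u p' = a') (hfp' : f p' = c')
    (h₁ : ∀ w ∈ S, a ≤ u w ↔ c ≤ f w) (h₂ : ∀ w ∈ S, a' ≤ u w ↔ f w ≤ c') : False := by
  have := h₁ p' hp'
  have := h₂ p hp
  rcases ha.lt_or_gt with hlt | hlt <;> grind

end LevelSets

lemma Q_eq_Q_of_equiv {m n : ℕ} {A : Fin m → ℝ} {B : Fin n → ℝ} (e : Fin m ≃ Fin n) {x y : ℝ}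
    (he : ∀ k, A k ≤ x ↔ B (e k) ≤ y) : Q x A = Q y B :=
  Finset.card_equiv e fun k => by simp [he]

lemma Q_eq_Qneg_of_equiv {m n : ℕ} {A : Fin m → ℝ} {B : Fin n → ℝ} (e : Fin m ≃ Fin n)
    {x y : ℝ} (he : ∀ k, A k ≤ x ↔ y ≤ B (e k)) : Q x A = Qneg y B :=
  Finset.card_equiv e fun k => by simp [he]

section Orientation

variable {d : ℕ} {S S' : Set (Euc d)} {h hinv : Euc d → Euc d}

theorem le_iff_or_le_iff_of_image_Gamma_eq (hdiff : IsSmoothDiffeoOn h hinv S S') {i j : Fin d}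
    {a c : ℝ} (ha : IsAxisSeparator S i a) (hc : IsAxisSeparator S' j c)
    (himg : h '' Gamma S i a = Gamma S' j c) :
    (∀ w ∈ S, a ≤ w i ↔ c ≤ h w j) ∨ (∀ w ∈ S, a ≤ w i ↔ h w j ≤ c) := by
  refine le_iff_or_le_iff_of_level_set (u := fun w => w i) (f := fun w => h w j)
    ((EuclideanSpace.proj j).continuous.comp_continuousOn hdiff.smooth.continuousOn)
    ha.2.1.isPreconnected ha.2.2.isPreconnected (fun w hw => ⟨fun hwc => ?_, fun hwa => ?_⟩)
    ?_ ?_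
  · have hwc' : h w ∈ h '' Gamma S i a := himg ▸ ⟨hdiff.mapsTo hw, hwc⟩
    obtain ⟨w', hw', hww'⟩ := hwc'
    exact hdiff.invOn.1.injOn hw'.1 hw hww' ▸ hw'.2
  · exact (himg ▸ mem_image_of_mem h ⟨hw, hwa⟩ : h w ∈ Gamma S' j c).2
  · obtain ⟨y, hy, hyc⟩ := hc.2.2.nonempty
    exact ⟨hinv y, hdiff.mapsTo_inv hy, by simpa [hdiff.right_inv y hy] using hyc⟩
  · obtain ⟨y, hy, hyc⟩ := hc.2.1.nonempty
    exact ⟨hinv y, hdiff.mapsTo_inv hy, by simpa [hdiff.right_inv y hy] using hyc⟩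

theorem exists_sign_Q_eq (hdiff : IsSmoothDiffeoOn h hinv S S') {CA : DiscreteCoordination S}
    {CB : DiscreteCoordination S'} {i j : Fin d} (e : Fin (CA.n i) ≃ Fin (CB.n j))
    (he : ∀ k, h '' Gamma S i (CA.A i k) = Gamma S' j (CB.A j (e k))) :
    ∃ s : ℤ, (s = 1 ∨ s = -1) ∧ ∀ z ∈ S, Q (z i) (CA.A i) = Qsgn s (h z j) (CB.A j) := by
  have hside k := le_iff_or_le_iff_of_image_Gamma_eq hdiff (CA.sep i k) (CB.sep j (e k)) (he k)
  have hpt : ∀ k, ∃ p ∈ S, p i = CA.A i k ∧ h p j = CB.A j (e k) := fun k => by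
    obtain ⟨p, hp⟩ := (CA.sep i k).1.nonempty
    exact ⟨p, hp.1, hp.2, (he k ▸ mem_image_of_mem h hp : h p ∈ Gamma S' j _).2⟩
  by_cases hplus : ∀ k, ∀ w ∈ S, CA.A i k ≤ w i ↔ CB.A j (e k) ≤ h w j
  · exact ⟨1, .inl rfl, fun z hz => by
      simpa [Qsgn] using Q_eq_Q_of_equiv e fun k => hplus k z hz⟩
  obtain ⟨k₀, hk₀⟩ := not_forall.mp hplus
  have hminus : ∀ k, ∀ w ∈ S, CA.A i k ≤ w i ↔ h w j ≤ CB.A j (e k) := by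
    intro k
    refine (hside k).resolve_left fun hk => ?_
    have hne : k ≠ k₀ := by rintro rfl; exact hk₀ hk
    obtain ⟨p, hp, hpi, hpj⟩ := hpt k
    obtain ⟨p₀, hp₀, hp₀i, hp₀j⟩ := hpt k₀
    exact false_of_le_iff_le_of_le_iff_ge (u := fun w => w i) (f := fun w => h w j)
      ((CA.mono i).injective.ne hne) hp hp₀ hpi hpj hp₀i hp₀j hk ((hside k₀).resolve_left hk₀)
  exact ⟨-1, .inr rfl, fun z hz => by
    simpa [Qsgn] using Q_eq_Qneg_of_equiv e fun k => hminus k z hz⟩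

end Orientation

theorem recovery_of_quantized_factors_general
    {d : ℕ} {S S' : Set (Euc d)} (hS : IsOpen S)
    (hS' : IsOpen S')
    {h hinv : Euc d → Euc d} (hdiff : IsSmoothDiffeoOn h hinv S S')
    (CA : DiscreteCoordination S) (hbb : CA.HasBackbone)
    (CB : DiscreteCoordination S')
    (hgrid : h '' CA.grid = CB.grid) :
    ∃ (σ : Equiv.Perm (Fin d)) (s : Fin d → ℤ),
      (∀ i, s i = 1 ∨ s i = -1) ∧
      ∀ i : Fin d, ∀ z ∈ S, Q (z i) (CA.A i) = Qsgn (s i) (h z (σ i)) (CB.A (σ i)) := by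
  obtain ⟨σ, himg⟩ := exists_perm_image_Gamma_eq hS hS' hdiff hgrid hbb
  have hsign (i : Fin d) : ∃ s : ℤ, (s = 1 ∨ s = -1) ∧
      ∀ z ∈ S, Q (z i) (CA.A i) = Qsgn s (h z (σ i)) (CB.A (σ i)) := by
    obtain ⟨e, he⟩ := exists_equiv_image_Gamma_eq hS hS' hdiff hgrid σ.injective himg i
    exact exists_sign_Q_eq hdiff e he
  choose s hs hQ using hsign
  exact ⟨σ, s, hs, hQ⟩

/-- **Recovery of quantized factors (Corollary).** -/
theorem recovery_of_quantized_factors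
    {d : ℕ} {S S' : Set (Euc d)} (hS : IsOpen S) (hSc : IsConnected S)
    (hS' : IsOpen S') (hS'c : IsConnected S')
    {h hinv : Euc d → Euc d} (hdiff : IsSmoothDiffeoOn h hinv S S')
    (CA : DiscreteCoordination S) (hbb : CA.HasBackbone)
    (CB : DiscreteCoordination S')
    (hgrid : h '' CA.grid = CB.grid) :
    ∃ (σ : Equiv.Perm (Fin d)) (s : Fin d → ℤ),
      (∀ i, s i = 1 ∨ s i = -1) ∧
      ∀ i : Fin d, ∀ z ∈ S, Q (z i) (CA.A i) = Qsgn (s i) (h z (σ i)) (CB.A (σ i)) :=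
  recovery_of_quantized_factors_general hS hS' hdiff CA hbb CB hgrid
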